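/- Let M be a G-invariant MDP with discount 0 ≤ γ < 1 and bounded reward. Then the optimal state-action value function Q* satisfies Q*(g·s, g·a) = Q*(s, a) for all g ∈ G, s ∈ S, a ∈ A. -/

import Mathlib

/-!
The Bellman optimality operator commutes with the substitution `Q ↦ Q (g • ·) (g • ·)`: the reward
and the transition kernel are invariant, and `a' ↦ g • a'` only permutes the actions inside the
supremum. Hence `Q (g • ·) (g • ·)` is again a bounded fixed point, and since the operator is a
`γ`-contraction in the sup norm, its bounded fixed point is unique.
-/

open MeasureTheory

theorem ciSup_le_ciSup_add {ι : Type*} [Nonempty ι] {f g : ι → ℝ} (hg : BddAbove (Set.range g))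
    {c : ℝ} (h : ∀ i, f i ≤ g i + c) : ⨆ i, f i ≤ (⨆ i, g i) + c :=
  ciSup_le fun i => (h i).trans (add_le_add_left (le_ciSup hg i) c)

theorem abs_ciSup_sub_ciSup_le {ι : Type*} [Nonempty ι] {f g : ι → ℝ}
    (hf : BddAbove (Set.range f)) (hg : BddAbove (Set.range g)) {c : ℝ}
    (h : ∀ i, |f i - g i| ≤ c) : |(⨆ i, f i) - ⨆ i, g i| ≤ c := by
  rw [abs_sub_le_iff, sub_le_iff_le_add', sub_le_iff_le_add']
  exact ⟨ciSup_le_ciSup_add hg fun i => by linarith [(abs_le.1 (h i)).2],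
    ciSup_le_ciSup_add hf fun i => by linarith [(abs_le.1 (h i)).1]⟩

theorem bddAbove_range_of_abs_le {ι : Type*} {f : ι → ℝ} {C : ℝ} (h : ∀ i, |f i| ≤ C) :
    BddAbove (Set.range f) :=
  ⟨C, Set.forall_mem_range.2 fun i => (abs_le.1 (h i)).2⟩

theorem abs_ciSup_le {ι : Type*} [Nonempty ι] {f : ι → ℝ} {C : ℝ} (h : ∀ i, |f i| ≤ C) :
    |⨆ i, f i| ≤ C :=
  let i₀ := Classical.arbitrary ι
  abs_le.2 ⟨(abs_le.1 (h i₀)).1.trans (le_ciSup (bddAbove_range_of_abs_le h) i₀),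
    ciSup_le fun i => (abs_le.1 (h i)).2⟩

section Bellman

variable {S A : Type*} [MeasurableSpace S]

noncomputable def bellmanOptimality (P : S → A → Measure S) (r : S → A → ℝ) (γ : ℝ)
    (Q : S → A → ℝ) : S → A → ℝ :=
  fun s a => r s a + γ * ∫ s', ⨆ a', Q s' a' ∂(P s a)

theorem integrable_iSup_of_abs_le [Nonempty A] (μ : Measure S) [IsFiniteMeasure μ]
    {Q : S → A → ℝ} {C : ℝ} (hQ : ∀ s a, |Q s a| ≤ C) (hm : Measurable fun s => ⨆ a, Q s a) :
    Integrable (fun s => ⨆ a, Q s a) μ :=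
  (integrable_const C).mono' hm.aestronglyMeasurable
    (ae_of_all _ fun s => abs_ciSup_le (hQ s))

theorem abs_bellmanOptimality_sub_le (P : S → A → Measure S) (r : S → A → ℝ) {γ : ℝ}
    (hγ : 0 ≤ γ) {Q₁ Q₂ : S → A → ℝ} {C c : ℝ} (h₁ : ∀ s a, |Q₁ s a| ≤ C)
    (h₂ : ∀ s a, |Q₂ s a| ≤ C) (hm₁ : Measurable fun s => ⨆ a, Q₁ s a)
    (hm₂ : Measurable fun s => ⨆ a, Q₂ s a) (hc : ∀ s a, |Q₁ s a - Q₂ s a| ≤ c)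
    (s : S) (a : A) [IsProbabilityMeasure (P s a)] :
    |bellmanOptimality P r γ Q₁ s a - bellmanOptimality P r γ Q₂ s a| ≤ γ * c := by
  have : Nonempty A := ⟨a⟩
  have hsup : ∀ s', |(⨆ a', Q₁ s' a') - ⨆ a', Q₂ s' a'| ≤ c := fun s' =>
    abs_ciSup_sub_ciSup_le (bddAbove_range_of_abs_le (h₁ s'))
      (bddAbove_range_of_abs_le (h₂ s')) (hc s')
  have hint : |∫ s', (⨆ a', Q₁ s' a') - ⨆ a', Q₂ s' a' ∂(P s a)| ≤ c := by
    simpa using norm_integral_le_of_norm_le_const (μ := P s a)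
      (ae_of_all _ fun s' => (Real.norm_eq_abs _).trans_le (hsup s'))
  rw [bellmanOptimality, bellmanOptimality, add_sub_add_left_eq_sub, ← mul_sub,
    ← integral_sub (integrable_iSup_of_abs_le _ h₁ hm₁) (integrable_iSup_of_abs_le _ h₂ hm₂),
    abs_mul, abs_of_nonneg hγ]
  exact mul_le_mul_of_nonneg_left hint hγ

theorem bellmanOptimality_fixedPoint_unique {P : S → A → Measure S} {r : S → A → ℝ} {γ : ℝ}
    (hγ0 : 0 ≤ γ) (hγ1 : γ < 1) [∀ s a, IsProbabilityMeasure (P s a)] {Q₁ Q₂ : S → A → ℝ}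
    {C : ℝ} (h₁ : ∀ s a, |Q₁ s a| ≤ C) (h₂ : ∀ s a, |Q₂ s a| ≤ C)
    (hm₁ : Measurable fun s => ⨆ a, Q₁ s a) (hm₂ : Measurable fun s => ⨆ a, Q₂ s a)
    (hQ₁ : bellmanOptimality P r γ Q₁ = Q₁) (hQ₂ : bellmanOptimality P r γ Q₂ = Q₂) :
    Q₁ = Q₂ := by
  funext s a
  have : Nonempty (S × A) := ⟨(s, a)⟩
  set d := ⨆ p : S × A, |Q₁ p.1 p.2 - Q₂ p.1 p.2|
  have hbdd : BddAbove (Set.range fun p : S × A => |Q₁ p.1 p.2 - Q₂ p.1 p.2|) :=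
    bddAbove_range_of_abs_le (C := 2 * C) fun p => by
      rw [abs_abs]
      linarith [abs_sub (Q₁ p.1 p.2) (Q₂ p.1 p.2), h₁ p.1 p.2, h₂ p.1 p.2]
  have hle_d : ∀ s a, |Q₁ s a - Q₂ s a| ≤ d := fun s a => le_ciSup hbdd (s, a)
  have hle_γd : ∀ s a, |Q₁ s a - Q₂ s a| ≤ γ * d := fun s a => by
    simpa only [hQ₁, hQ₂] using abs_bellmanOptimality_sub_le P r hγ0 h₁ h₂ hm₁ hm₂ hle_d s a
  have hd : d ≤ γ * d := ciSup_le fun p => hle_γd p.1 p.2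
  have hd0 : 0 ≤ d := (abs_nonneg _).trans (hle_d s a)
  have hdiff : |Q₁ s a - Q₂ s a| ≤ 0 := (hle_d s a).trans (by nlinarith)
  exact sub_eq_zero.1 (abs_nonpos_iff.1 hdiff)

theorem bellmanOptimality_comp {P : S → A → Measure S} {r : S → A → ℝ} {γ : ℝ} {σ : S → S}
    {τ : A → A} (hσ : Measurable σ) (hτ : Function.Surjective τ)
    (hP : ∀ s a, P (σ s) (τ a) = (P s a).map σ) (hr : ∀ s a, r (σ s) (τ a) = r s a)
    {Q : S → A → ℝ} (hm : Measurable fun s => ⨆ a, Q s a) (s : S) (a : A) :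
    bellmanOptimality P r γ Q (σ s) (τ a) =
      bellmanOptimality P r γ (fun s a => Q (σ s) (τ a)) s a := by
  simp only [bellmanOptimality, hP, hr, integral_map hσ.aemeasurable hm.aestronglyMeasurable,
    hτ.iSup_comp]

end Bellman

/-- In a `G`-invariant MDP, the optimal state-action value function (the unique
bounded fixed point of the Bellman optimality operator) is `G`-invariant. -/
theorem optimal_Q_invariant {G S A : Type*} [Group G]
    [MulAction G S] [MulAction G A] [MeasurableSpace S]
    (hmeas : ∀ g : G, Measurable (fun s : S => g • s))
    (P : S → A → Measure S) (hprob : ∀ s a, IsProbabilityMeasure (P s a))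
    (r : S → A → ℝ)
    (hP : ∀ (g : G) (s : S) (a : A),
      P (g • s) (g • a) = Measure.map (fun s' : S => g • s') (P s a))
    (hr : ∀ (g : G) (s : S) (a : A), r (g • s) (g • a) = r s a)
    (γ : ℝ) (hγ0 : 0 ≤ γ) (hγ1 : γ < 1)
    (Q : S → A → ℝ) (CQ : ℝ) (hQbdd : ∀ s a, |Q s a| ≤ CQ)
    (hQmeas : Measurable (fun s' : S => ⨆ a' : A, Q s' a'))
    (hbellman : ∀ s a, Q s a = r s a + γ * ∫ s', (⨆ a' : A, Q s' a') ∂(P s a)) :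
    ∀ (g : G) (s : S) (a : A), Q (g • s) (g • a) = Q s a := by
  intro g
  have hfix : bellmanOptimality P r γ Q = Q := funext₂ fun s a => (hbellman s a).symm
  have hsurj : Function.Surjective (g • · : A → A) := MulAction.surjective g
  have hfix_g : bellmanOptimality P r γ (fun s a => Q (g • s) (g • a)) =
      fun s a => Q (g • s) (g • a) := funext₂ fun s a => by
    rw [← bellmanOptimality_comp (hmeas g) hsurj (hP g) (hr g) hQmeas, hfix]
  have hmeas_g : Measurable fun s => ⨆ a, Q (g • s) (g • a) := by
    simpa only [hsurj.iSup_comp, Function.comp_def] using hQmeas.comp (hmeas g)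
  exact congrFun₂ (bellmanOptimality_fixedPoint_unique hγ0 hγ1 (fun s a => hQbdd _ _) hQbdd
    hmeas_g hQmeas hfix_g hfix)
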